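/- In dimension d = 3, the fiducial vector (0, 1, -1)/√2 under the action of the Weyl–Heisenberg group generated by the shift X and clock Z (with ω = e^{2πi/3}) generates 9 unit vectors whose pairwise squared overlaps all equal 1/4; i.e., these vectors form a SIC-POVM in ℂ³ (the Hesse SIC). -/

import Mathlib

/-!
The displacement operators `X^a Z^b` are unitary and satisfy `Z X = ω X Z`, so
`(X^a Z^b)† X^a' Z^b'` is a phase times `X^(a'-a) Z^(b'-b)`. Hence every orbit vector is a unit
vector and each overlap has the modulus of `⟨ψ, X^c Z^e ψ⟩` with `(c, e) = (a'-a, b'-b)`. For the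
fiducial `ψ = (0, 1, -1)/√2` that overlap is `(ω^e + ω^(2e))/2 = -1/2` when `c = 0` and
`-ω^(ce)/2` otherwise, of squared modulus `1/4` as soon as `(c, e) ≠ 0`.
-/

open Matrix

def clockMatrix (n : ℕ) (ω : ℂ) : Matrix (Fin n) (Fin n) ℂ :=
  diagonal fun j => ω ^ (j : ℕ)

theorem clockMatrix_pow {n : ℕ} (ω : ℂ) (k : ℕ) :
    clockMatrix n ω ^ k = diagonal fun j : Fin n => ω ^ ((j : ℕ) * k) := by
  simp [clockMatrix, diagonal_pow, pow_mul]

theorem clockMatrix_pow_card {n : ℕ} {ω : ℂ} (hω : ω ^ n = 1) : clockMatrix n ω ^ n = 1 := by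
  simp [clockMatrix_pow, mul_comm _ n, pow_mul, hω]

theorem clockMatrix_mem_unitaryGroup {n : ℕ} {ω : ℂ} (hω : ‖ω‖ = 1) :
    clockMatrix n ω ∈ unitaryGroup (Fin n) ℂ := by
  rw [mem_unitaryGroup_iff']
  simp only [clockMatrix, star_eq_conjTranspose, diagonal_conjTranspose, diagonal_mul_diagonal]
  rw [← diagonal_one]
  congr 1
  ext j
  simp [← mul_pow, Complex.conj_mul', hω]

section WeylHeisenberg

variable {n : ℕ} [NeZero n]

def shiftMatrix (n : ℕ) [NeZero n] : Matrix (Fin n) (Fin n) ℂ :=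
  of fun i j => if i = j + 1 then 1 else 0

theorem shiftMatrix_mulVec (v : Fin n → ℂ) : shiftMatrix n *ᵥ v = fun i => v (i - 1) := by
  ext i
  simp_rw [shiftMatrix, mulVec, dotProduct, of_apply, ite_mul, one_mul, zero_mul, eq_comm (a := i),
    ← eq_sub_iff_add_eq, Finset.sum_ite_eq', Finset.mem_univ, if_true]

theorem shiftMatrix_pow_mulVec (k : ℕ) (v : Fin n → ℂ) :
    shiftMatrix n ^ k *ᵥ v = fun i => v (i - Fin.ofNat n k) := by
  induction k with
  | zero => simp
  | succ k ih =>
    rw [pow_succ', ← mulVec_mulVec, ih, shiftMatrix_mulVec]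
    have hsucc : Fin.ofNat n (k + 1) = Fin.ofNat n k + 1 := by
      ext
      simp [Fin.val_add, Nat.add_mod]
    ext i
    rw [hsucc, sub_sub, add_comm 1]

theorem shiftMatrix_pow_card : shiftMatrix n ^ n = 1 :=
  ext_iff_mulVec.mpr fun v => by simp [shiftMatrix_pow_mulVec]

theorem shiftMatrix_mem_unitaryGroup : shiftMatrix n ∈ unitaryGroup (Fin n) ℂ := by
  rw [mem_unitaryGroup_iff']
  ext i j
  simp [shiftMatrix, mul_apply, one_apply, eq_comm]

theorem clockMatrix_mul_shiftMatrix {ω : ℂ} (hω : ω ^ n = 1) :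
    clockMatrix n ω * shiftMatrix n = ω • (shiftMatrix n * clockMatrix n ω) := by
  ext i j
  simp only [clockMatrix, shiftMatrix, diagonal_mul, mul_diagonal, of_apply, Matrix.smul_apply,
    smul_eq_mul, mul_ite, ite_mul, one_mul, mul_zero, zero_mul]
  split_ifs with h
  · rw [h, Fin.val_add, ← pow_eq_pow_mod _ hω, pow_add, Fin.val_one', ← pow_eq_pow_mod _ hω]
    ring
  · rfl

theorem clockMatrix_mul_shiftMatrix_pow {ω : ℂ} (hω : ω ^ n = 1) (a : ℕ) :
    clockMatrix n ω * shiftMatrix n ^ a = ω ^ a • (shiftMatrix n ^ a * clockMatrix n ω) := by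
  induction a with
  | zero => simp
  | succ a ih =>
    rw [pow_succ, ← mul_assoc, ih, smul_mul_assoc, mul_assoc, clockMatrix_mul_shiftMatrix hω,
      mul_smul_comm, smul_smul, ← pow_succ, ← mul_assoc]

theorem clockMatrix_pow_mul_shiftMatrix_pow {ω : ℂ} (hω : ω ^ n = 1) (a b : ℕ) :
    clockMatrix n ω ^ b * shiftMatrix n ^ a =
      ω ^ (a * b) • (shiftMatrix n ^ a * clockMatrix n ω ^ b) := by
  induction b with
  | zero => simp
  | succ b ih =>
    rw [pow_succ', mul_assoc, ih, mul_smul_comm, ← mul_assoc, clockMatrix_mul_shiftMatrix_pow hω,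
      smul_mul_assoc, smul_smul, mul_assoc, ← pow_succ', ← pow_add, mul_add_one]

def weylMatrix (n : ℕ) [NeZero n] (ω : ℂ) (a b : ℕ) : Matrix (Fin n) (Fin n) ℂ :=
  shiftMatrix n ^ a * clockMatrix n ω ^ b

theorem weylMatrix_mulVec (ω : ℂ) (a b : ℕ) (v : Fin n → ℂ) :
    weylMatrix n ω a b *ᵥ v =
      fun i => ω ^ ((i - Fin.ofNat n a : Fin n) * b : ℕ) * v (i - Fin.ofNat n a) := by
  rw [weylMatrix, ← mulVec_mulVec, shiftMatrix_pow_mulVec, clockMatrix_pow]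
  simp only [mulVec_diagonal]

theorem weylMatrix_mul {ω : ℂ} (hω : ω ^ n = 1) (a b c e : ℕ) :
    weylMatrix n ω a b * weylMatrix n ω c e = ω ^ (c * b) • weylMatrix n ω (a + c) (b + e) := by
  rw [weylMatrix, weylMatrix, weylMatrix, mul_assoc, ← mul_assoc (clockMatrix n ω ^ b),
    clockMatrix_pow_mul_shiftMatrix_pow hω, smul_mul_assoc, mul_smul_comm, pow_add, pow_add]
  simp only [mul_assoc]

theorem weylMatrix_mod {ω : ℂ} (hω : ω ^ n = 1) (a b : ℕ) :
    weylMatrix n ω a b = weylMatrix n ω (a % n) (b % n) := by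
  rw [weylMatrix, weylMatrix, pow_eq_pow_mod a shiftMatrix_pow_card,
    pow_eq_pow_mod b (clockMatrix_pow_card hω)]

theorem weylMatrix_mem_unitaryGroup {ω : ℂ} (hω : ‖ω‖ = 1) (a b : ℕ) :
    weylMatrix n ω a b ∈ unitaryGroup (Fin n) ℂ :=
  mul_mem (pow_mem shiftMatrix_mem_unitaryGroup a) (pow_mem (clockMatrix_mem_unitaryGroup hω) b)

end WeylHeisenberg

theorem star_mulVec_dotProduct_mulVec_of_mem_unitaryGroup {m α : Type*} [Fintype m]
    [DecidableEq m] [CommRing α] [StarRing α] {U : Matrix m m α} (hU : U ∈ unitaryGroup m α)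
    (v w : m → α) :
    star (U *ᵥ v) ⬝ᵥ (U *ᵥ w) = star v ⬝ᵥ w := by
  rw [star_mulVec, ← dotProduct_mulVec, mulVec_mulVec, ← star_eq_conjTranspose,
    mem_unitaryGroup_iff'.mp hU, one_mulVec]

theorem norm_dotProduct_weylMatrix_mulVec {n : ℕ} [NeZero n] {ω : ℂ} (hω : ω ^ n = 1)
    (ψ : Fin n → ℂ) (a b a' b' : Fin n) :
    ‖star (weylMatrix n ω a b *ᵥ ψ) ⬝ᵥ (weylMatrix n ω a' b' *ᵥ ψ)‖ =
      ‖star ψ ⬝ᵥ (weylMatrix n ω (a' - a : Fin n) (b' - b : Fin n) *ᵥ ψ)‖ := by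
  have hω1 : ‖ω‖ = 1 := Complex.norm_eq_one_of_pow_eq_one hω (NeZero.ne n)
  have hmul : weylMatrix n ω a b * weylMatrix n ω (a' - a : Fin n) (b' - b : Fin n) =
      ω ^ ((a' - a : Fin n) * b : ℕ) • weylMatrix n ω a' b' := by
    rw [weylMatrix_mul hω, weylMatrix_mod hω, ← Fin.val_add, ← Fin.val_add, add_sub_cancel,
      add_sub_cancel]
  calc ‖star (weylMatrix n ω a b *ᵥ ψ) ⬝ᵥ (weylMatrix n ω a' b' *ᵥ ψ)‖
      = ‖star (weylMatrix n ω a b *ᵥ ψ) ⬝ᵥ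
          ((ω ^ ((a' - a : Fin n) * b : ℕ) • weylMatrix n ω a' b') *ᵥ ψ)‖ := by
        rw [smul_mulVec, dotProduct_smul, smul_eq_mul, norm_mul, norm_pow, hω1, one_pow, one_mul]
    _ = ‖star ψ ⬝ᵥ (weylMatrix n ω (a' - a : Fin n) (b' - b : Fin n) *ᵥ ψ)‖ := by
        rw [← hmul, ← mulVec_mulVec, star_mulVec_dotProduct_mulVec_of_mem_unitaryGroup
          (weylMatrix_mem_unitaryGroup hω1 _ _)]

noncomputable def hesseFiducial : Fin 3 → ℂ := ![0, (Real.sqrt 2 : ℂ)⁻¹, -(Real.sqrt 2 : ℂ)⁻¹]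

theorem inv_sqrt_two_mul_inv_sqrt_two : (Real.sqrt 2 : ℂ)⁻¹ * (Real.sqrt 2 : ℂ)⁻¹ = 1 / 2 := by
  rw [← mul_inv, ← Complex.ofReal_mul, Real.mul_self_sqrt zero_le_two]
  norm_num

theorem star_hesseFiducial_dotProduct_self : star hesseFiducial ⬝ᵥ hesseFiducial = 1 := by
  simp [hesseFiducial, dotProduct, Fin.sum_univ_three, inv_sqrt_two_mul_inv_sqrt_two]
  norm_num

theorem star_hesseFiducial_dotProduct_weylMatrix_mulVec (ω : ℂ) (c e : Fin 3) :
    star hesseFiducial ⬝ᵥ (weylMatrix 3 ω c e *ᵥ hesseFiducial) =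
      if c = 0 then (ω ^ (e : ℕ) + ω ^ (2 * e : ℕ)) / 2 else -(ω ^ (c * e : ℕ) / 2) := by
  rw [weylMatrix_mulVec]
  fin_cases c <;> simp [hesseFiducial, dotProduct, Fin.sum_univ_three, Fin.ofNat,
    mul_left_comm _ (ω ^ _), inv_sqrt_two_mul_inv_sqrt_two, div_eq_mul_inv, add_mul]

theorem norm_sq_star_hesseFiducial_dotProduct_weylMatrix_mulVec {ω : ℂ}
    (hω : IsPrimitiveRoot ω 3) {c e : Fin 3} (hce : (c, e) ≠ 0) :
    ‖star hesseFiducial ⬝ᵥ (weylMatrix 3 ω c e *ᵥ hesseFiducial)‖ ^ 2 = 1 / 4 := by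
  rw [star_hesseFiducial_dotProduct_weylMatrix_mulVec]
  split_ifs with hc
  · have hsum : 1 + ω + ω ^ 2 = 0 := by
      simpa [Finset.sum_range_succ] using hω.geom_sum_eq_zero (by norm_num)
    have hpow : ω ^ (e : ℕ) + ω ^ (2 * e : ℕ) = -1 := by
      subst hc
      fin_cases e
      · exact absurd rfl hce
      · norm_num
        linear_combination hsum
      · norm_num
        linear_combination ω * hω.pow_eq_one + hsum
    rw [hpow]
    norm_num
  · rw [norm_neg, norm_div, norm_pow, hω.norm'_eq_one three_ne_zero]
    norm_num

theorem hesse_sic_qutrit :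
    ∀ (ω : ℂ), ω = Complex.exp (2 * Real.pi * Complex.I / 3) →
    ∀ (X Z : Matrix (Fin 3) (Fin 3) ℂ),
      X = Matrix.of (fun i j : Fin 3 => if i = j + 1 then (1 : ℂ) else 0) →
      Z = Matrix.of (fun i j : Fin 3 => if i = j then ω ^ (j : ℕ) else 0) →
    ∀ (ψ : Fin 3 → ℂ), ψ = ![0, (Real.sqrt 2 : ℂ)⁻¹, -(Real.sqrt 2 : ℂ)⁻¹] →
    ∀ (φ : Fin 3 × Fin 3 → Fin 3 → ℂ),
      φ = (fun p => ((X ^ (p.1 : ℕ)) * (Z ^ (p.2 : ℕ))).mulVec ψ) →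
    Function.Injective φ ∧
    (∀ p, star (φ p) ⬝ᵥ φ p = 1) ∧
    (∀ p q, p ≠ q → ‖star (φ p) ⬝ᵥ φ q‖ ^ 2 = 1 / 4) := by
  rintro ω hω X Z rfl hZ ψ rfl φ hφ
  have hprim : IsPrimitiveRoot ω 3 := by
    simpa [hω] using Complex.isPrimitiveRoot_exp 3 three_ne_zero
  obtain rfl : Z = clockMatrix 3 ω := by
    rw [hZ, clockMatrix]
    ext i j
    by_cases h : i = j <;> simp [h]
  obtain rfl : φ = fun p => weylMatrix 3 ω p.1 p.2 *ᵥ hesseFiducial := hφ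
  have hunit (p : Fin 3 × Fin 3) :
      star (weylMatrix 3 ω p.1 p.2 *ᵥ hesseFiducial) ⬝ᵥ (weylMatrix 3 ω p.1 p.2 *ᵥ hesseFiducial)
        = 1 := by
    rw [star_mulVec_dotProduct_mulVec_of_mem_unitaryGroup
      (weylMatrix_mem_unitaryGroup (hprim.norm'_eq_one three_ne_zero) _ _),
      star_hesseFiducial_dotProduct_self]
  have hsic (p q : Fin 3 × Fin 3) (hpq : p ≠ q) :
      ‖star (weylMatrix 3 ω p.1 p.2 *ᵥ hesseFiducial) ⬝ᵥ
        (weylMatrix 3 ω q.1 q.2 *ᵥ hesseFiducial)‖ ^ 2 = 1 / 4 := by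
    rw [norm_dotProduct_weylMatrix_mulVec hprim.pow_eq_one]
    refine norm_sq_star_hesseFiducial_dotProduct_weylMatrix_mulVec hprim ?_
    simpa [Prod.ext_iff, sub_eq_zero, eq_comm] using hpq
  refine ⟨fun p q hφ => by_contra fun hpq => ?_, hunit, hsic⟩
  have h := hsic p q hpq
  beta_reduce at hφ
  rw [hφ, hunit] at h
  norm_num at h
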